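/- For every set partition word p, the number of applications of φ_{aba} needed to sort p is at most N(p), and this bound is tight: for each n ≥ 3 there exists p with N(p) = n requiring exactly n applications, namely p = (a_1 ⋯ a_n)^2. -/

import Mathlib

/-- West's stack-sorting map, implemented with an explicit stack (top = head). -/
def sWestAux : List ℕ → List ℕ → List ℕ
  | [], st => st
  | x :: xs, [] => sWestAux xs [x]
  | x :: xs, t :: st =>
      if t < x then t :: sWestAux (x :: xs) st
      else sWestAux xs (x :: t :: st)
termination_by l st => 2 * l.length + st.length

def sWest (l : List ℕ) : List ℕ := sWestAux l []

/-- A word contains a subsequence equivalent to `aba`. -/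
def HasABA (l : List ℕ) : Prop :=
  ∃ i j k : Fin l.length, i < j ∧ j < k ∧ l.get i = l.get k ∧ l.get j ≠ l.get i

instance (l : List ℕ) : Decidable (HasABA l) := by
  unfold HasABA; infer_instance

/-- Xia's stack-sorting map φ_{aba}, with explicit stack (top = head). -/
def phiAux : List ℕ → List ℕ → List ℕ
  | [], st => st
  | x :: xs, [] => phiAux xs [x]
  | x :: xs, t :: st =>
      if HasABA (x :: t :: st) then t :: phiAux (x :: xs) st
      else phiAux xs (x :: t :: st)
termination_by l st => 2 * l.length + st.length

def phi (p : List ℕ) : List ℕ := phiAux p []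

/-- A set partition word is sorted: all occurrences of each letter are consecutive. -/
def SortedWord (p : List ℕ) : Prop :=
  ∀ i j k : Fin p.length, i < j → j < k → p.get i = p.get k → p.get j = p.get i

/-- Number of distinct letters. -/
def Nletters (p : List ℕ) : ℕ := p.toFinset.card

def Avoids231 (l : List ℕ) : Prop :=
  ¬ ∃ i j k : Fin l.length, i < j ∧ j < k ∧ l.get k < l.get i ∧ l.get i < l.get j

/-!
While the stack avoids `aba`, an incoming letter is pushed exactly when it equals the top of the
stack or does not occur in it. Hence a letter whose occurrences are consecutive keeps this property
under `φ`, and the first letter of the word acquires it, since it stays at the bottom of the stack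
until the input is exhausted. A leading block can be peeled off, `φ (xᵏ t) = φ t xᵏ`, so each
application to an unsorted word clusters a new letter, and `N(p)` applications suffice.

For `w = a₁ ⋯ aₙ`, one application maps `X v Y v Z`, with `v = b u` and all parts `aba`-free and
pairwise disjoint, to `Yʳ uʳ Zʳ uʳ b b Xʳ`. After `n - 1` steps `v` is a single letter with a
nonempty `Y` between its two copies, so the word is not yet sorted.
-/

open List

lemma triple_sublist_iff {a b c : ℕ} {l : List ℕ} :
    [a, b, c] <+ l ↔
      ∃ i j k : Fin l.length, i < j ∧ j < k ∧ l.get i = a ∧ l.get j = b ∧ l.get k = c := by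
  constructor
  · rw [sublist_iff_exists_fin_orderEmbedding_get_eq]
    rintro ⟨f, hf⟩
    exact ⟨f 0, f 1, f 2, f.strictMono (by simp), f.strictMono (by simp [Fin.lt_def]),
      (hf 0).symm, (hf 1).symm, (hf 2).symm⟩
  · rintro ⟨i, j, k, hij, hjk, rfl, rfl, rfl⟩
    simpa using map_getElem_sublist (l := l) (is := [i, j, k])
      (by simp [hij, hjk, hij.trans hjk])

lemma hasABA_iff {l : List ℕ} : HasABA l ↔ ∃ a b, b ≠ a ∧ [a, b, a] <+ l := by
  simp only [HasABA, triple_sublist_iff]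
  constructor
  · rintro ⟨i, j, k, hij, hjk, hik, hji⟩
    exact ⟨_, _, hji, i, j, k, hij, hjk, rfl, rfl, hik.symm⟩
  · rintro ⟨a, b, hba, i, j, k, hij, hjk, rfl, rfl, hk⟩
    exact ⟨i, j, k, hij, hjk, hk.symm, hba⟩

def Clustered (a : ℕ) (l : List ℕ) : Prop := ∀ b, b ≠ a → ¬ [a, b, a] <+ l

lemma not_hasABA_iff {l : List ℕ} : ¬ HasABA l ↔ ∀ a, Clustered a l := by
  simp [hasABA_iff, Clustered]

lemma sortedWord_iff_not_hasABA {p : List ℕ} : SortedWord p ↔ ¬ HasABA p := by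
  simp only [SortedWord, HasABA, not_exists, not_and, ne_eq, not_not]

lemma triple_sublist_append {a b c : ℕ} {l₁ l₂ : List ℕ} (h : [a, b, c] <+ l₁ ++ l₂) :
    [a, b, c] <+ l₁ ∨ [a, b, c] <+ l₂ ∨ (a ∈ l₁ ∧ c ∈ l₂) := by
  obtain ⟨r₁, r₂, e, h₁, h₂⟩ := sublist_append_iff.1 h
  rcases r₁ with _ | ⟨x, _ | ⟨y, _ | ⟨z, _ | ⟨w, r⟩⟩⟩⟩
  · simp_all
  · simp only [singleton_append, cons.injEq] at e
    obtain ⟨rfl, rfl⟩ := e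
    exact Or.inr (Or.inr ⟨h₁.subset (by simp), h₂.subset (by simp)⟩)
  · simp only [cons_append, cons.injEq] at e
    obtain ⟨rfl, rfl, rfl⟩ := e
    exact Or.inr (Or.inr ⟨h₁.subset (by simp), h₂.subset (by simp)⟩)
  · simp only [cons_append, nil_append, cons.injEq] at e
    obtain ⟨rfl, rfl, rfl, rfl⟩ := e
    exact Or.inl h₁
  · simp at e

lemma disjoint_replicate_right {a : ℕ} {l : List ℕ} (k : ℕ) (ha : a ∉ l) :
    l.Disjoint (replicate k a) :=
  fun _ hy hy' => ha (by rwa [← eq_of_mem_replicate hy'])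

lemma Clustered.sublist {a : ℕ} {l l' : List ℕ} (h : Clustered a l) (hl : l' <+ l) :
    Clustered a l' :=
  fun b hb hs => h b hb (hs.trans hl)

lemma clustered_of_not_mem {a : ℕ} {l : List ℕ} (h : a ∉ l) : Clustered a l :=
  fun _ _ hs => h (hs.subset (by simp))

lemma clustered_reverse_iff {a : ℕ} {l : List ℕ} : Clustered a l.reverse ↔ Clustered a l := by
  simp [Clustered, sublist_reverse_iff]

lemma clustered_replicate (a b : ℕ) (k : ℕ) : Clustered a (replicate k b) := by
  intro c hc hs
  exact hc ((eq_of_mem_replicate (hs.subset (by simp))).trans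
    (eq_of_mem_replicate (hs.subset (by simp))).symm)

lemma clustered_append_iff {a : ℕ} {l₁ l₂ : List ℕ} (hd : l₁.Disjoint l₂) :
    Clustered a (l₁ ++ l₂) ↔ Clustered a l₁ ∧ Clustered a l₂ := by
  refine ⟨fun h => ⟨h.sublist (sublist_append_left _ _), h.sublist (sublist_append_right _ _)⟩,
    fun ⟨h₁, h₂⟩ b hb hs => ?_⟩
  rcases triple_sublist_append hs with hs | hs | ⟨ha₁, ha₂⟩
  exacts [h₁ b hb hs, h₂ b hb hs, hd ha₁ ha₂]

lemma Clustered.cons_of_ne {a b : ℕ} {l : List ℕ} (h : Clustered a l) (hb : b ≠ a) :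
    Clustered a (b :: l) := by
  intro c hc hs
  rcases sublist_cons_iff.1 hs with hs | ⟨r, hr, -⟩
  exacts [h c hc hs, hb (cons.inj hr).1.symm]

lemma Clustered.cons_self {a : ℕ} {l : List ℕ} (h : Clustered a (a :: l)) :
    Clustered a (a :: a :: l) := by
  intro c hc hs
  rcases sublist_cons_iff.1 hs with hs | ⟨r, hr, hs⟩
  · exact h c hc hs
  · obtain rfl : [c, a] = r := (cons.inj hr).2
    exact h c hc (cons_sublist_cons.2 (sublist_cons_iff.1 hs |>.resolve_right
      (by rintro ⟨_, hr', -⟩; exact hc (cons.inj hr').1)))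

lemma HasABA.sublist {l l' : List ℕ} (h : HasABA l) (hl : l <+ l') : HasABA l' := by
  obtain ⟨a, b, hba, hs⟩ := hasABA_iff.1 h
  exact hasABA_iff.2 ⟨a, b, hba, hs.trans hl⟩

lemma hasABA_reverse {l : List ℕ} : HasABA l.reverse ↔ HasABA l := by
  simp [hasABA_iff, sublist_reverse_iff]

lemma hasABA_append {l₁ l₂ : List ℕ} (hd : l₁.Disjoint l₂) :
    HasABA (l₁ ++ l₂) ↔ HasABA l₁ ∨ HasABA l₂ := by
  rw [← not_iff_not, not_or, not_hasABA_iff, not_hasABA_iff, not_hasABA_iff]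
  simp only [clustered_append_iff hd, forall_and]

lemma not_hasABA_replicate (k a : ℕ) : ¬ HasABA (replicate k a) :=
  not_hasABA_iff.2 fun b => clustered_replicate b a k

lemma not_hasABA_of_nodup {l : List ℕ} (h : l.Nodup) : ¬ HasABA l := by
  rw [hasABA_iff]
  rintro ⟨a, b, hba, hs⟩
  have := (hs.count_le a).trans (nodup_iff_count_le_one.1 h a)
  simp [hba] at this

lemma not_hasABA_flatten {L : List (List ℕ)} (hL : ∀ l ∈ L, ¬ HasABA l)
    (hd : L.Pairwise List.Disjoint) : ¬ HasABA L.flatten := by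
  induction L with
  | nil => simp [hasABA_iff]
  | cons l L ih =>
    rw [pairwise_cons] at hd
    have hdisj : l.Disjoint L.flatten := fun x hx hx' => by
      obtain ⟨m, hm, hxm⟩ := mem_flatten.1 hx'
      exact hd.1 m hm hx hxm
    rw [flatten_cons, hasABA_append hdisj]
    simp_all

lemma hasABA_cons_cons {x t : ℕ} {st : List ℕ} (hxt : x ≠ t) (hx : x ∈ st) :
    HasABA (x :: t :: st) :=
  hasABA_iff.2 ⟨x, t, hxt.symm, (singleton_sublist.2 hx).cons_cons t |>.cons_cons x⟩

lemma hasABA_cons_cons_iff {x t : ℕ} {st : List ℕ} (h : ¬ HasABA (t :: st)) :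
    HasABA (x :: t :: st) ↔ x ≠ t ∧ x ∈ st := by
  refine ⟨fun hx => ?_, fun ⟨hxt, hx⟩ => hasABA_cons_cons hxt hx⟩
  obtain ⟨a, b, hba, hs⟩ := hasABA_iff.1 hx
  rcases sublist_cons_iff.1 hs with hs | ⟨r, hr, hs⟩
  · exact absurd (hasABA_iff.2 ⟨a, b, hba, hs⟩) h
  obtain ⟨rfl, rfl⟩ := cons.inj hr
  rcases sublist_cons_iff.1 hs with hs | ⟨r, hr, hs⟩
  · refine ⟨fun hat => h (hasABA_iff.2 ⟨a, b, hba, ?_⟩), hs.subset (by simp)⟩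
    exact hat ▸ hs.cons_cons a
  · obtain ⟨rfl, rfl⟩ := cons.inj hr
    exact ⟨hba.symm, singleton_sublist.1 hs⟩

@[simp] lemma phiAux_nil (st : List ℕ) : phiAux [] st = st := by rw [phiAux]

@[simp] lemma phiAux_cons_nil (x : ℕ) (xs : List ℕ) : phiAux (x :: xs) [] = phiAux xs [x] := by
  rw [phiAux]

lemma phiAux_pop {x t : ℕ} {xs st : List ℕ} (h : HasABA (x :: t :: st)) :
    phiAux (x :: xs) (t :: st) = t :: phiAux (x :: xs) st := by
  rw [phiAux, if_pos h]

lemma phiAux_push {x t : ℕ} {xs st : List ℕ} (h : ¬ HasABA (x :: t :: st)) :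
    phiAux (x :: xs) (t :: st) = phiAux xs (x :: t :: st) := by
  rw [phiAux, if_neg h]

lemma phiAux_perm (inp st : List ℕ) : phiAux inp st ~ inp ++ st := by
  induction inp, st using phiAux.induct with
  | case1 st => simp
  | case2 x xs ih => simpa using ih.trans perm_append_comm
  | case3 x xs t st h ih =>
    rw [phiAux_pop h]
    exact (ih.cons t).trans perm_middle.symm
  | case4 x xs t st h ih =>
    rw [phiAux_push h]
    simpa using ih.trans perm_middle

lemma phi_perm (p : List ℕ) : phi p ~ p := by
  simpa [phi] using phiAux_perm p []

lemma phiAux_append_of_not_hasABA (s inp st : List ℕ) (h : ¬ HasABA (s.reverse ++ st)) :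
    phiAux (s ++ inp) st = phiAux inp (s.reverse ++ st) := by
  induction s generalizing st with
  | nil => simp
  | cons x s ih =>
    rw [reverse_cons, append_assoc, singleton_append] at h
    rw [cons_append, reverse_cons, append_assoc, singleton_append, ← ih _ h]
    cases st with
    | nil => simp
    | cons t st => exact phiAux_push fun hx => h (hx.sublist (sublist_append_right _ _))

lemma phiAux_pop_append {b : ℕ} {s : List ℕ} (xs st : List ℕ) (hb : b ∉ s) :
    phiAux (b :: xs) (s ++ b :: st) = s ++ phiAux (b :: xs) (b :: st) := by
  induction s with
  | nil => rfl
  | cons t s ih =>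
    rw [mem_cons, not_or] at hb
    rw [cons_append, phiAux_pop (hasABA_cons_cons hb.1 (by simp)), ih hb.2,
      cons_append]

lemma eq_cons_of_not_hasABA_cons {a : ℕ} {st : List ℕ} (h : ¬ HasABA (a :: st)) (ha : a ∈ st) :
    ∃ st', st = a :: st' := by
  obtain _ | ⟨s, st'⟩ := st
  · simp at ha
  · obtain rfl | ha' := eq_or_ne s a
    · exact ⟨st', rfl⟩
    · exact absurd (hasABA_cons_cons ha'.symm ((mem_cons.1 ha).resolve_left ha'.symm)) h

lemma clustered_cons_of_not_mem {a : ℕ} {l : List ℕ} (h : a ∉ l) : Clustered a (a :: l) := by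
  simpa using (clustered_append_iff (l₁ := [a]) (by simpa using h)).2
    ⟨by simpa using clustered_replicate a a 1, clustered_of_not_mem h⟩

/-- Pushes leave `st.reverse ++ inp` (the stack read bottom to top, then the input) unchanged and
pops delete a letter from it. A letter `a` is popped only when the incoming letter lies strictly
below it, so either the rest of the block of `a` is popped right after it or no `a` is left. -/
lemma clustered_phiAux {a : ℕ} (inp st : List ℕ) (hst : ¬ HasABA st)
    (h : Clustered a (st.reverse ++ inp)) : Clustered a (phiAux inp st) := by
  induction inp, st using phiAux.induct with
  | case1 st => simpa [clustered_reverse_iff] using h.sublist (sublist_append_left _ [])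
  | case2 x xs ih =>
    rw [phiAux_cons_nil]
    exact ih (by simp [hasABA_iff]) (by simpa using h)
  | case3 x xs t st hpop ih =>
    rw [phiAux_pop hpop]
    have hR := ih (fun h' => hst (h'.sublist (sublist_cons_self t st)))
      (h.sublist (by simp))
    obtain hta | rfl := ne_or_eq t a
    · exact hR.cons_of_ne hta
    obtain ⟨hxt, hxs⟩ := (hasABA_cons_cons_iff hst).1 hpop
    by_cases hst' : t ∈ st
    · obtain ⟨st', rfl⟩ := eq_cons_of_not_hasABA_cons hst hst'
      rw [phiAux_pop (hasABA_cons_cons hxt ((mem_cons.1 hxs).resolve_left hxt))] at hR ⊢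
      exact hR.cons_self
    · have htxs : t ∉ xs := fun htxs => h x hxt (by
        simpa using ((singleton_sublist.2 htxs).cons_cons x).cons_cons t |>.trans
          (sublist_append_right st.reverse _))
      refine clustered_cons_of_not_mem fun htR => ?_
      simp only [(phiAux_perm _ _).mem_iff, mem_append, mem_cons] at htR
      tauto
  | case4 x xs t st hpush ih =>
    rw [phiAux_push hpush]
    exact ih hpush (by simpa using h)

def EndsWithBlock (x : ℕ) (l : List ℕ) : Prop := ∃ o k, l = o ++ replicate k x ∧ x ∉ o

lemma EndsWithBlock.clustered {x : ℕ} {l : List ℕ} (h : EndsWithBlock x l) : Clustered x l := by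
  obtain ⟨o, k, rfl, hx⟩ := h
  exact (clustered_append_iff (disjoint_replicate_right k hx)).2
    ⟨clustered_of_not_mem hx, clustered_replicate x x k⟩

lemma not_hasABA_cons_replicate (y x k : ℕ) : ¬ HasABA (y :: replicate k x) := by
  obtain rfl | hyx := eq_or_ne y x
  · simpa [← replicate_succ] using not_hasABA_replicate (k + 1) y
  · rw [← singleton_append, hasABA_append (disjoint_replicate_right k (by simpa using hyx.symm))]
    simp [not_hasABA_replicate, not_hasABA_of_nodup]

/-- A block of `x` at the bottom of the stack is never popped before the input is exhausted:
popping it would need an incoming letter below it. -/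
lemma endsWithBlock_phiAux {x : ℕ} (inp st : List ℕ) (hst : EndsWithBlock x st)
    (hinp : x ∈ inp → x ∈ st) : EndsWithBlock x (phiAux inp st) := by
  induction inp, st using phiAux.induct with
  | case1 st => simpa using hst
  | case2 y xs ih =>
    have hx : x ∉ y :: xs := fun h => by simpa using hinp h
    rw [phiAux_cons_nil]
    exact ih ⟨[y], 0, by simp, fun h => hx (by simp_all)⟩ fun h => absurd (mem_cons_of_mem y h) hx
  | case3 y xs t st hpop ih =>
    rw [phiAux_pop hpop]
    obtain ⟨_ | ⟨t', o⟩, k, hst, hx⟩ := hst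
    · obtain _ | k := k
      · simp at hst
      · rw [nil_append, replicate_succ] at hst
        obtain ⟨rfl, rfl⟩ := cons.inj hst
        exact absurd hpop (by simpa [replicate_succ] using not_hasABA_cons_replicate y t (k + 1))
    obtain ⟨rfl, rfl⟩ := cons.inj hst
    have hxt : x ≠ t := fun h => hx (by simp [h])
    obtain ⟨o', k', hR, hx'⟩ := ih ⟨o, k, rfl, fun h => hx (mem_cons_of_mem t h)⟩
      fun h => (mem_cons.1 (hinp h)).resolve_left hxt
    exact ⟨t :: o', k', by rw [hR, cons_append], by simp [hxt, hx']⟩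
  | case4 y xs t st hpush ih =>
    rw [phiAux_push hpush]
    refine ih ?_ fun h => mem_cons_of_mem y (hinp (mem_cons_of_mem y h))
    obtain ⟨o, k, hst, hx⟩ := hst
    obtain rfl | hyx := eq_or_ne y x
    · obtain rfl : t = y := by_contra fun hty => hpush (hasABA_cons_cons (Ne.symm hty)
        ((mem_cons.1 (hinp (mem_cons_self ..))).resolve_left (Ne.symm hty)))
      obtain _ | ⟨o₁, o⟩ := o
      · exact ⟨[], k + 1, by simp [hst, replicate_succ], by simp⟩
      · exact absurd (by simp [(cons.inj hst).1]) hx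
    · exact ⟨y :: o, k, by rw [hst, cons_append], by simp [hyx.symm, hx]⟩

lemma clustered_phi_cons (x : ℕ) (rest : List ℕ) : Clustered x (phi (x :: rest)) := by
  rw [phi, phiAux_cons_nil]
  refine (endsWithBlock_phiAux rest [x] ⟨[], 1, rfl, not_mem_nil⟩ fun _ => ?_).clustered
  exact mem_singleton_self x

lemma hasABA_append_replicate {a : ℕ} {l : List ℕ} (k : ℕ) (ha : a ∉ l) :
    HasABA (l ++ replicate k a) ↔ HasABA l := by
  rw [hasABA_append (disjoint_replicate_right k ha), or_iff_left (not_hasABA_replicate k a)]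

lemma phiAux_append_replicate {a : ℕ} (k : ℕ) (inp st : List ℕ) (hinp : a ∉ inp) (hst : a ∉ st) :
    phiAux inp (st ++ replicate k a) = phiAux inp st ++ replicate k a := by
  induction inp, st using phiAux.induct with
  | case1 st => simp
  | case2 x xs ih =>
    rw [mem_cons, not_or] at hinp
    rw [nil_append, phiAux_cons_nil, ← ih hinp.2 (by simpa using hinp.1)]
    obtain _ | k := k
    · simp
    · rw [replicate_succ, phiAux_push (by
        rw [← replicate_succ]; exact not_hasABA_cons_replicate x a (k + 1))]
      rfl
  | case3 x xs t st hpop ih =>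
    rw [mem_cons, not_or] at hst
    have hxts : a ∉ x :: t :: st := by simp_all
    rw [cons_append, phiAux_pop (by rwa [← cons_append, ← cons_append,
      hasABA_append_replicate k hxts]), ih hinp hst.2, phiAux_pop hpop, cons_append]
  | case4 x xs t st hpush ih =>
    have hxts : a ∉ x :: t :: st := by simp_all
    rw [cons_append, phiAux_push (by rwa [← cons_append, ← cons_append,
      hasABA_append_replicate k hxts]), phiAux_push hpush]
    exact ih (fun h => hinp (mem_cons_of_mem x h)) hxts

lemma phi_replicate_append {a : ℕ} (m : ℕ) {t : List ℕ} (ha : a ∉ t) :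
    phi (replicate m a ++ t) = phi t ++ replicate m a := by
  rw [phi, phiAux_append_of_not_hasABA _ _ _ (by simpa using not_hasABA_replicate m a)]
  simpa [phi] using phiAux_append_replicate m t [] ha not_mem_nil

open Classical in
noncomputable def unclustered (p : List ℕ) : Finset ℕ := p.toFinset.filter fun a => ¬ Clustered a p

lemma mem_unclustered {a : ℕ} {p : List ℕ} : a ∈ unclustered p ↔ ¬ Clustered a p := by
  simp only [unclustered, Finset.mem_filter, mem_toFinset, and_iff_right_iff_imp]
  exact fun h => not_not.1 (mt clustered_of_not_mem h)

lemma unclustered_eq_empty {p : List ℕ} : unclustered p = ∅ ↔ SortedWord p := by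
  simp [Finset.eq_empty_iff_forall_notMem, mem_unclustered, sortedWord_iff_not_hasABA,
    not_hasABA_iff]

lemma unclustered_append {l₁ l₂ : List ℕ} (hd : l₁.Disjoint l₂) :
    unclustered (l₁ ++ l₂) = unclustered l₁ ∪ unclustered l₂ := by
  ext a
  simp only [mem_unclustered, Finset.mem_union, clustered_append_iff hd, not_and_or]

lemma unclustered_replicate (k a : ℕ) : unclustered (replicate k a) = ∅ :=
  unclustered_eq_empty.2 (sortedWord_iff_not_hasABA.2 (not_hasABA_replicate k a))

lemma card_unclustered_le (p : List ℕ) : (unclustered p).card ≤ Nletters p := by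
  classical
  exact Finset.card_filter_le _ _

lemma unclustered_phi_subset (p : List ℕ) : unclustered (phi p) ⊆ unclustered p := by
  intro a
  simp only [mem_unclustered, not_imp_not]
  exact fun h => clustered_phiAux p [] (by simp [hasABA_iff]) (by simpa using h)

lemma exists_eq_replicate_append {x : ℕ} {rest : List ℕ} (h : Clustered x (x :: rest)) :
    ∃ k t, x :: rest = replicate (k + 1) x ++ t ∧ x ∉ t := by
  induction rest with
  | nil => exact ⟨0, [], rfl, not_mem_nil⟩
  | cons y rest ih =>
    obtain rfl | hyx := eq_or_ne y x
    · obtain ⟨k, t, e, ht⟩ := ih (h.sublist (sublist_cons_self _ _))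
      exact ⟨k + 1, t, by simp [e, replicate_succ], ht⟩
    · refine ⟨0, y :: rest, rfl, ?_⟩
      rintro (_ | ⟨_, hx⟩)
      · exact hyx rfl
      · exact h y hyx ((singleton_sublist.2 hx).cons_cons y |>.cons_cons x)

lemma unclustered_phi_ssubset {p : List ℕ} (hp : ¬ SortedWord p) :
    unclustered (phi p) ⊂ unclustered p := by
  induction hn : p.length using Nat.strong_induction_on generalizing p with
  | _ n ih =>
  obtain _ | ⟨x, rest⟩ := p
  · exact absurd (unclustered_eq_empty.1 (by simp [unclustered])) hp
  by_cases hx : Clustered x (x :: rest)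
  · obtain ⟨k, t, e, hxt⟩ := exists_eq_replicate_append hx
    have hxt' : x ∉ phi t := fun h => hxt ((phi_perm t).subset h)
    have hpt : unclustered (x :: rest) = unclustered t := by
      rw [e, unclustered_append (disjoint_replicate_right _ hxt).symm, unclustered_replicate,
        Finset.empty_union]
    rw [e, phi_replicate_append _ hxt, unclustered_append (disjoint_replicate_right _ hxt'),
      unclustered_replicate, Finset.union_empty, ← e, hpt]
    refine ih t.length ?_ (fun ht => hp ?_) rfl
    · rw [← hn, e, length_append, length_replicate]
      omega
    · rw [← unclustered_eq_empty, hpt, unclustered_eq_empty]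
      exact ht
  · refine (Finset.ssubset_iff_of_subset (unclustered_phi_subset _)).2 ⟨x, ?_, ?_⟩
    · exact mem_unclustered.2 hx
    · exact fun h => mem_unclustered.1 h (clustered_phi_cons x rest)

lemma sortedWord_phi_iterate {p : List ℕ} {k : ℕ} (h : (unclustered p).card ≤ k) :
    SortedWord (phi^[k] p) := by
  induction k generalizing p with
  | zero => exact unclustered_eq_empty.1 (Finset.card_eq_zero.1 (Nat.le_zero.1 h))
  | succ k ih =>
    rw [Function.iterate_succ_apply]
    refine ih ?_
    by_cases hp : SortedWord p
    · rw [Finset.subset_empty.1 ((unclustered_phi_subset p).trans_eq (unclustered_eq_empty.2 hp))]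
      simp
    · exact Nat.le_of_lt_succ ((Finset.card_lt_card (unclustered_phi_ssubset hp)).trans_le h)

structure DoubledForm (X v Y Z : List ℕ) : Prop where
  nodup : v.Nodup
  not_hasABA_left : ¬ HasABA X
  not_hasABA_middle : ¬ HasABA Y
  not_hasABA_right : ¬ HasABA Z
  pairwise_disjoint : [X, v, Y, Z].Pairwise List.Disjoint

namespace DoubledForm

variable {b : ℕ} {X u v Y Z : List ℕ}

lemma phi_eq (h : DoubledForm X (b :: u) Y Z) :
    phi (X ++ b :: u ++ Y ++ b :: u ++ Z) =
      Y.reverse ++ u.reverse ++ Z.reverse ++ u.reverse ++ b :: b :: X.reverse := by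
  obtain ⟨hv, hX, hY, hZ, hd⟩ := h
  simp only [pairwise_cons, mem_cons, forall_eq_or_imp, not_mem_nil, IsEmpty.forall_iff,
    implies_true, Pairwise.nil, and_true, disjoint_cons_left, disjoint_cons_right] at hd
  rw [nodup_cons] at hv
  have hpush₁ : ¬ HasABA ((X ++ b :: u ++ Y).reverse ++ []) := by
    rw [append_nil, hasABA_reverse]
    simpa using not_hasABA_flatten (L := [X, b :: u, Y]) (by simp [*, not_hasABA_of_nodup])
      (by simp [*])
  have hpush₂ : ¬ HasABA ((b :: (u ++ Z)).reverse ++ b :: X.reverse) := by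
    have e : (b :: (u ++ Z)).reverse ++ b :: X.reverse = (X ++ [b, b] ++ u ++ Z).reverse := by simp
    rw [e, hasABA_reverse]
    have hbb : ¬ HasABA [b, b] := not_hasABA_replicate 2 b
    simpa using not_hasABA_flatten (L := [X, [b, b], u, Z])
      (by simp [*, not_hasABA_of_nodup]) (by simp [*])
  have hb : b ∉ Y.reverse ++ u.reverse := by simp [*]
  rw [phi, show X ++ b :: u ++ Y ++ b :: u ++ Z = (X ++ b :: u ++ Y) ++ b :: (u ++ Z) by simp,
    phiAux_append_of_not_hasABA _ _ _ hpush₁,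
    show (X ++ b :: u ++ Y).reverse ++ [] = (Y.reverse ++ u.reverse) ++ b :: X.reverse by simp,
    phiAux_pop_append _ _ hb, ← append_nil (b :: (u ++ Z)),
    phiAux_append_of_not_hasABA _ _ _ hpush₂]
  simp

lemma next (h : DoubledForm X (b :: u) Y Z) :
    DoubledForm Y.reverse u.reverse Z.reverse (b :: b :: X.reverse) := by
  obtain ⟨hv, hX, hY, hZ, hd⟩ := h
  simp only [pairwise_cons, mem_cons, forall_eq_or_imp, not_mem_nil, IsEmpty.forall_iff,
    implies_true, Pairwise.nil, and_true, disjoint_cons_left, disjoint_cons_right] at hd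
  rw [nodup_cons] at hv
  refine ⟨nodup_reverse.2 hv.2, by rwa [hasABA_reverse], by rwa [hasABA_reverse], ?_, ?_⟩
  · have hbb : ¬ HasABA [b, b] := not_hasABA_replicate 2 b
    have e : b :: b :: X.reverse = (X ++ [b, b]).reverse := by simp
    rw [e, hasABA_reverse]
    simpa using not_hasABA_flatten (L := [X, [b, b]]) (by simp [*]) (by simp [*])
  · simp [*, disjoint_reverse_right, disjoint_comm]

lemma hasABA (h : DoubledForm X v Y Z) (hv : v ≠ []) (hY : Y ≠ []) :
    HasABA (X ++ v ++ Y ++ v ++ Z) := by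
  obtain ⟨b, hb⟩ := exists_mem_of_ne_nil v hv
  obtain ⟨y, hy⟩ := exists_mem_of_ne_nil Y hY
  have hyb : y ≠ b := fun e => (pairwise_cons.1 (pairwise_cons.1 h.pairwise_disjoint).2).1 Y
    (by simp) hb (e ▸ hy)
  refine hasABA_iff.2 ⟨b, y, hyb, ?_⟩
  have := ((singleton_sublist.2 (mem_append_right X hb)).append (singleton_sublist.2 hy)).append
    (singleton_sublist.2 (mem_append_left Z hb))
  simpa using this

end DoubledForm

lemma phi_iterate_append_self {w : List ℕ} (hw : w.Nodup) {t : ℕ} (ht : t ≤ w.length) :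
    ∃ X v Y Z, phi^[t] (w ++ w) = X ++ v ++ Y ++ v ++ Z ∧ DoubledForm X v Y Z ∧
      v.length + t = w.length ∧ (1 ≤ t → Z ≠ []) ∧ (2 ≤ t → Y ≠ []) := by
  induction t with
  | zero => exact ⟨[], w, [], [], by simp, ⟨hw, by simp [hasABA_iff], by simp [hasABA_iff],
      by simp [hasABA_iff], by simp⟩, rfl, by simp, by simp⟩
  | succ t ih =>
    obtain ⟨X, _ | ⟨b, u⟩, Y, Z, hp, h, hlen, hZ, -⟩ := ih (by omega)
    · simp at hlen; omega
    refine ⟨Y.reverse, u.reverse, Z.reverse, b :: b :: X.reverse, ?_, h.next, ?_, by simp, ?_⟩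
    · rw [Function.iterate_succ_apply', hp, h.phi_eq]
    · simp at hlen ⊢; omega
    · exact fun ht => by simpa using hZ (by omega)

/-- N(p) applications of φ_{aba} always sort p, and for each n ≥ 3 this bound is
attained by p = (a₁⋯aₙ)², which needs exactly n applications. -/
theorem stmt19 :
    (∀ p : List ℕ, SortedWord (phi^[Nletters p] p)) ∧
    (∀ n : ℕ, 3 ≤ n → ∀ w : List ℕ, w.Nodup → w.length = n →
      Nletters (w ++ w) = n ∧ SortedWord (phi^[n] (w ++ w)) ∧
        ¬ SortedWord (phi^[n - 1] (w ++ w))) := by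
  have sorted : ∀ p : List ℕ, SortedWord (phi^[Nletters p] p) := fun p =>
    sortedWord_phi_iterate (card_unclustered_le p)
  refine ⟨sorted, fun n hn w hw hlen => ?_⟩
  have hN : Nletters (w ++ w) = n := by
    rw [Nletters, toFinset_append, Finset.union_self, toFinset_card_of_nodup hw, hlen]
  refine ⟨hN, hN ▸ sorted (w ++ w), ?_⟩
  obtain ⟨X, v, Y, Z, hp, h, hv, -, hY⟩ := phi_iterate_append_self hw (t := n - 1) (by omega)
  rw [hp, sortedWord_iff_not_hasABA, not_not]
  exact h.hasABA (ne_nil_of_length_pos (by omega)) (hY (by omega))
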